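/- For i.i.d. ℝ^d-valued random vectors whose coordinates are i.i.d. with a continuous distribution, the expected number of multivariate records among the first n observations equals Σ_{j=1}^n 1/j^d, which converges as n → ∞ for d ≥ 2; hence by Borel–Cantelli-type reasoning the total number of multivariate records is almost surely finite when d ≥ 2. -/

import Mathlib

open MeasureTheory ProbabilityTheory
open scoped ENNReal Classical

/-! A record at time `n + 1` means that in every coordinate `i` the value `X (n + 1) i` is
the strict maximum of the column `X 1 i, …, X (n + 1) i`. The `d` columns are independent, so
the probability of a record factorises over the coordinates. Within a column the `n + 1`
values are i.i.d. without atoms, so almost surely exactly one of them is the strict maximum,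
and by exchangeability each position is equally likely: the last one wins with probability
`1 / (n + 1)`. Hence `ℙ(record at j) = j⁻ᵈ`; linearity of expectation gives the expected
count, and for `d ≥ 2` the series `∑ j⁻ᵈ` converges, so the first Borel–Cantelli lemma
leaves only finitely many records. -/

section StrictMax

variable {ι α : Type*} [LinearOrder α]

def strictMaxSet (k : ι) : Set (ι → α) := {z | ∀ m, m ≠ k → z m < z k}

lemma pairwise_disjoint_strictMaxSet :
    Pairwise (Function.onFun Disjoint (strictMaxSet : ι → Set (ι → α))) := fun k k' hne =>
  Set.disjoint_left.mpr fun _ hk hk' => lt_asymm (hk k' hne.symm) (hk' k hne)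

lemma exists_mem_strictMaxSet_of_injective [Finite ι] [Nonempty ι] {z : ι → α}
    (hz : Function.Injective z) : ∃ k, z ∈ strictMaxSet k := by
  obtain ⟨k, hk⟩ := Finite.exists_max z
  exact ⟨k, fun m hm => (hk m).lt_of_ne (hz.ne hm)⟩

lemma comp_swap_mem_strictMaxSet_iff (k k' : ι) (z : ι → α) :
    z ∘ Equiv.swap k k' ∈ strictMaxSet k ↔ z ∈ strictMaxSet k' := by
  constructor <;>
  · intro h m hm
    simpa using h (Equiv.swap k k' m) (by simpa [Equiv.swap_apply_eq_iff] using hm)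

end StrictMax

lemma ae_injective_pi {ι α : Type*} [Fintype ι] [MeasurableSpace α] [MeasurableEq α]
    (ν : ι → Measure α) [∀ i, IsProbabilityMeasure (ν i)]
    [∀ i, NullSingletonClass (ν i)] :
    ∀ᵐ z ∂Measure.pi ν, Function.Injective z := by
  have hpair : ∀ m m', m ≠ m' → ∀ᵐ z ∂Measure.pi ν, z m ≠ z m' := by
    intro m m' hne
    have hind : IndepFun (fun z : ι → α => z m) (fun z => z m') (Measure.pi ν) :=
      (iIndepFun_pi (X := fun _ x => x) fun _ => aemeasurable_id).indepFun hne
    have hlaw : (Measure.pi ν).map (fun z => (z m, z m')) = (ν m).prod (ν m') := by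
      rw [hind.map_prod_eq_prod_map_map (measurable_pi_apply m).aemeasurable
        (measurable_pi_apply m').aemeasurable, (measurePreserving_eval ν m).map_eq,
        (measurePreserving_eval ν m').map_eq]
    have hdiag : MeasurableSet {p : α × α | p.1 = p.2} := measurableSet_diagonal
    rw [ae_iff]
    simp only [ne_eq, not_not]
    rw [show {z : ι → α | z m = z m'} = (fun z => (z m, z m')) ⁻¹' {p | p.1 = p.2} from rfl,
      ← Measure.map_apply (by fun_prop) hdiag, hlaw, Measure.prod_apply hdiag]
    simp [Set.preimage]
  have hall : ∀ᵐ z ∂Measure.pi ν, ∀ m m', m ≠ m' → z m ≠ z m' :=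
    ae_all_iff.mpr fun m => ae_all_iff.mpr fun m' => by
      by_cases hne : m = m'
      · exact .of_forall fun _ h => absurd hne h
      · filter_upwards [hpair m m' hne] with z hz using fun _ => hz
  filter_upwards [hall] with z hz m m' heq
  by_contra hne
  exact hz m m' hne heq

theorem MeasureTheory.Measure.pi_map_curry {κ ι β : Type*} [Fintype κ] [Fintype ι]
    [MeasurableSpace β] (ν : κ → ι → Measure β) [∀ i m, IsProbabilityMeasure (ν i m)] :
    (Measure.pi fun p : κ × ι => ν p.1 p.2).map (MeasurableEquiv.curry κ ι β) =
      Measure.pi fun i => Measure.pi (ν i) := by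
  simp only [← Measure.infinitePi_eq_pi, Measure.infinitePi_map_curry]

section Ordered

variable {ι α : Type*} [Fintype ι] [LinearOrder α] [MeasurableSpace α] [TopologicalSpace α]
  [OrderClosedTopology α] [SecondCountableTopology α] [OpensMeasurableSpace α]

lemma measurableSet_strictMaxSet (k : ι) : MeasurableSet (strictMaxSet k : Set (ι → α)) := by
  simp only [strictMaxSet, Set.ofPred_forall]
  exact .iInter fun m => .iInter fun _ =>
    measurableSet_lt (measurable_pi_apply m) (measurable_pi_apply k)

lemma pi_strictMaxSet_eq (ν : Measure α) [IsProbabilityMeasure ν] (k k' : ι) :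
    Measure.pi (fun _ : ι => ν) (strictMaxSet k) =
      Measure.pi (fun _ : ι => ν) (strictMaxSet k') := by
  have hswap := measurePreserving_arrowCongr' (fun _ : ι => ν) (fun _ => ν) (Equiv.swap k k')
    (MeasurableEquiv.refl α) fun _ => .id ν
  rw [← hswap.measure_preimage (measurableSet_strictMaxSet k).nullMeasurableSet]
  congr 1
  ext z
  exact comp_swap_mem_strictMaxSet_iff k k' z

lemma pi_strictMaxSet (ν : Measure α) [IsProbabilityMeasure ν] [NullSingletonClass ν] (k : ι) :
    Measure.pi (fun _ : ι => ν) (strictMaxSet k) = (Fintype.card ι : ℝ≥0∞)⁻¹ := by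
  have : Nonempty ι := ⟨k⟩
  have hcover :
      ⋃ k', strictMaxSet k' =ᵐ[Measure.pi fun _ : ι => ν] (Set.univ : Set (ι → α)) := by
    refine ae_eq_univ.mpr (measure_mono_null ?_ (ae_injective_pi fun _ => ν))
    intro z hz hinj
    exact hz (Set.mem_iUnion.mpr (exists_mem_strictMaxSet_of_injective hinj))
  have hsum : ∑ k' : ι, Measure.pi (fun _ : ι => ν) (strictMaxSet k') = 1 := by
    rw [← measure_univ (μ := Measure.pi fun _ : ι => ν), ← measure_congr hcover,
      measure_iUnion pairwise_disjoint_strictMaxSet measurableSet_strictMaxSet, tsum_fintype]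
  simp only [pi_strictMaxSet_eq ν _ k, Finset.sum_const, Finset.card_univ, nsmul_eq_mul] at hsum
  exact ENNReal.eq_inv_of_mul_eq_one_left (by rwa [mul_comm])

variable {Ω κ : Type*} [MeasurableSpace Ω] {μ : Measure Ω} [IsProbabilityMeasure μ]
  [Fintype κ]

lemma measure_forall_mem_strictMaxSet {Y : κ × ι → Ω → α} (hY : ∀ p, Measurable (Y p))
    (hindep : iIndepFun Y μ) (ν : κ → Measure α) [∀ i, NullSingletonClass (ν i)]
    (hlaw : ∀ p, μ.map (Y p) = ν p.1) (k : ι) :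
    μ {ω | ∀ i, (fun m => Y (i, m) ω) ∈ strictMaxSet k} =
      ((Fintype.card ι : ℝ≥0∞) ^ Fintype.card κ)⁻¹ := by
  have : ∀ i, IsProbabilityMeasure (ν i) := fun i => by
    rw [← hlaw (i, k)]
    exact Measure.isProbabilityMeasure_map (hY _).aemeasurable
  have hjoint : μ.map (fun ω p => Y p ω) = Measure.pi fun p : κ × ι => ν p.1 := by
    rw [(iIndepFun_iff_map_fun_eq_pi_map fun p => (hY p).aemeasurable).mp hindep]
    simp only [hlaw]
  -- after currying, the event is a box whose sides are `strictMaxSet k`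
  have hcurried : μ.map (fun ω i m => Y (i, m) ω) =
      Measure.pi fun i => Measure.pi fun _ : ι => ν i := by
    rw [← Measure.pi_map_curry (fun i (_ : ι) => ν i), ← hjoint,
      Measure.map_map (by fun_prop) (by fun_prop)]
    rfl
  have hevent : {ω | ∀ i, (fun m => Y (i, m) ω) ∈ strictMaxSet k} =
      (fun ω i m => Y (i, m) ω) ⁻¹' Set.univ.pi fun _ => strictMaxSet k := by
    ext ω; simp
  rw [hevent,
    ← Measure.map_apply (by fun_prop) (.univ_pi fun _ => measurableSet_strictMaxSet k),
    hcurried, Measure.pi_pi]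
  simp [pi_strictMaxSet, ENNReal.inv_pow]

end Ordered

section Records

variable {Ω κ α : Type*} [LinearOrder α]

def recordEvent (X : ℕ → Ω → κ → α) (j : ℕ) : Set Ω :=
  {ω | ∀ m, 1 ≤ m → m < j → ∀ i, X m ω i < X j ω i}

lemma recordEvent_succ (X : ℕ → Ω → κ → α) (n : ℕ) :
    recordEvent X (n + 1) =
      {ω | ∀ i, (fun m : Fin (n + 1) => X (m + 1) ω i) ∈ strictMaxSet (Fin.last n)} := by
  ext ω
  simp only [recordEvent, strictMaxSet, Set.mem_ofPred_eq]
  constructor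
  · intro h i m hm
    simpa using h (m + 1) (by omega) (by simpa using Fin.val_lt_last hm) i
  · intro h m hm1 hmn i
    have hlt := h i ⟨m - 1, by omega⟩ (by simp [Fin.ext_iff]; omega)
    simpa [Nat.sub_add_cancel hm1] using hlt

variable [MeasurableSpace Ω] [MeasurableSpace α] [TopologicalSpace α] [OrderClosedTopology α]
  [SecondCountableTopology α] [OpensMeasurableSpace α]

lemma measurableSet_recordEvent [Countable κ] {X : ℕ → Ω → κ → α}
    (hX : ∀ j, Measurable (X j)) (j : ℕ) :
    MeasurableSet (recordEvent X j) := by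
  simp only [recordEvent, Set.ofPred_forall]
  exact .iInter fun m => .iInter fun _ => .iInter fun _ => .iInter fun i =>
    measurableSet_lt (by fun_prop) (by fun_prop)

lemma measure_recordEvent [Fintype κ] {μ : Measure Ω} [IsProbabilityMeasure μ]
    {X : ℕ → Ω → κ → α} (hX : ∀ j, Measurable (X j))
    (hindep : iIndepFun (fun p : ℕ × κ => fun ω => X p.1 ω p.2) μ)
    (ν : κ → Measure α) [∀ i, NullSingletonClass (ν i)]
    (hlaw : ∀ m i, μ.map (fun ω => X m ω i) = ν i) (n : ℕ) :
    μ (recordEvent X (n + 1)) = (((n + 1 : ℕ) : ℝ≥0∞) ^ Fintype.card κ)⁻¹ := by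
  have hinj : Function.Injective fun p : κ × Fin (n + 1) => ((p.2 : ℕ) + 1, p.1) := by
    rintro ⟨i, m⟩ ⟨i', m'⟩ h
    simp only [Prod.mk.injEq, add_left_inj, Fin.val_inj] at h
    rw [h.1, h.2]
  rw [recordEvent_succ, measure_forall_mem_strictMaxSet
    (Y := fun (p : κ × Fin (n + 1)) ω => X (p.2 + 1) ω p.1)
    (fun p => by fun_prop) (hindep.precomp hinj) ν (fun p => hlaw _ p.1), Fintype.card_fin]

end Records

lemma tsum_inv_succ_pow_ne_top {d : ℕ} (hd : 2 ≤ d) :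
    ∑' n : ℕ, (((n + 1 : ℕ) : ℝ≥0∞) ^ d)⁻¹ ≠ ∞ := by
  have hsum : Summable fun n : ℕ => (((n + 1 : ℕ) : ℝ) ^ d)⁻¹ :=
    (summable_nat_add_iff 1).mpr (Real.summable_nat_pow_inv.mpr hd)
  have hcast : ∀ n : ℕ, (((n + 1 : ℕ) : ℝ≥0∞) ^ d)⁻¹ =
      ENNReal.ofReal ((((n + 1 : ℕ) : ℝ) ^ d)⁻¹) := fun n => by
    rw [ENNReal.ofReal_inv_of_pos (by positivity), ENNReal.ofReal_pow (by positivity),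
      ENNReal.ofReal_natCast]
  simp_rw [hcast]
  rw [← ENNReal.ofReal_tsum_of_nonneg (fun _ => by positivity) hsum]
  exact ENNReal.ofReal_ne_top

theorem multivariate_record_count_general {Ω : Type*} [MeasureSpace Ω]
    [IsProbabilityMeasure (ℙ : Measure Ω)]
    (d : ℕ)
    (X : ℕ → Ω → (Fin d → ℝ)) (hmeas : ∀ j, Measurable (X j))
    (hindep : iIndepFun
      (fun p : ℕ × Fin d => fun ω => X p.1 ω p.2) ℙ)
    (hid : ∀ p q : ℕ × Fin d,
      IdentDistrib (fun ω => X p.1 ω p.2) (fun ω => X q.1 ω q.2) ℙ ℙ)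
    (hcont : ∀ i (c : ℝ), ℙ {ω | X 1 ω i = c} = 0)
    (ζ : ℕ → Ω → ℝ)
    (hζ : ∀ j ω, ζ j ω =
      if ∀ m, 1 ≤ m → m < j → ∀ i, X m ω i < X j ω i then 1 else 0) :
    (∀ n : ℕ, 1 ≤ n →
      ∫ ω, ∑ j ∈ Finset.Icc 1 n, ζ j ω ∂ℙ
        = ∑ j ∈ Finset.Icc 1 n, (1 : ℝ) / (j : ℝ) ^ d) ∧
    (2 ≤ d → ∀ᵐ ω ∂ℙ,
      {j : ℕ | 1 ≤ j ∧ ∀ m, 1 ≤ m → m < j → ∀ i, X m ω i < X j ω i}.Finite) := by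
  let ν i : Measure ℝ := (ℙ : Measure Ω).map fun ω => X 1 ω i
  have : ∀ i, NullSingletonClass (ν i) := fun i => ⟨fun c => by
    rw [Measure.map_apply (by fun_prop) (measurableSet_singleton c)]
    exact hcont i c⟩
  have hrecord := measure_recordEvent hmeas hindep ν fun m i => (hid (m, i) (1, i)).map_eq
  have hζ_eq : ∀ j, ζ j = (recordEvent X j).indicator 1 := fun j => funext fun ω => by
    rw [hζ]; rfl
  refine ⟨fun n _ => ?_, fun hd => ?_⟩
  · rw [integral_finsetSum _ fun j _ => by
      rw [hζ_eq]; exact (integrable_const 1).indicator (measurableSet_recordEvent hmeas j)]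
    refine Finset.sum_congr rfl fun j hj => ?_
    obtain ⟨k, rfl⟩ := Nat.exists_eq_add_of_le' (Finset.mem_Icc.mp hj).1
    rw [hζ_eq, integral_indicator_one (measurableSet_recordEvent hmeas _), measureReal_def,
      hrecord, Fintype.card_fin, ENNReal.toReal_inv, ENNReal.toReal_pow, ENNReal.toReal_natCast,
      one_div]
  · have hfinite := ae_finite_setOfPred_mem (μ := (ℙ : Measure Ω))
      (s := fun j => {ω | 1 ≤ j ∧ ω ∈ recordEvent X j}) ?_
    · filter_upwards [hfinite] with ω hω using hω
    rw [tsum_eq_zero_add' ENNReal.summable]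
    simpa [hrecord] using tsum_inv_succ_pow_ne_top hd

/-- For i.i.d. random vectors in `ℝ^d` whose coordinates (across all observations
and directions) are i.i.d. with continuous distribution, the expected number of
multivariate records among the first `n` observations equals `Σ_{j=1}^n 1/j^d`; and
when `d ≥ 2` the total number of multivariate records is almost surely finite. -/
theorem multivariate_record_count {Ω : Type*} [MeasureSpace Ω]
    [IsProbabilityMeasure (ℙ : Measure Ω)]
    (d : ℕ) (hd : 1 ≤ d)
    (X : ℕ → Ω → (Fin d → ℝ)) (hmeas : ∀ j, Measurable (X j))
    (hindep : iIndepFun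
      (fun p : ℕ × Fin d => fun ω => X p.1 ω p.2) ℙ)
    (hid : ∀ p q : ℕ × Fin d,
      IdentDistrib (fun ω => X p.1 ω p.2) (fun ω => X q.1 ω q.2) ℙ ℙ)
    (hcont : ∀ i (c : ℝ), ℙ {ω | X 1 ω i = c} = 0)
    (ζ : ℕ → Ω → ℝ)
    (hζ : ∀ j ω, ζ j ω =
      if ∀ m, 1 ≤ m → m < j → ∀ i, X m ω i < X j ω i then 1 else 0) :
    (∀ n : ℕ, 1 ≤ n →
      ∫ ω, ∑ j ∈ Finset.Icc 1 n, ζ j ω ∂ℙ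
        = ∑ j ∈ Finset.Icc 1 n, (1 : ℝ) / (j : ℝ) ^ d) ∧
    (2 ≤ d → ∀ᵐ ω ∂ℙ,
      {j : ℕ | 1 ≤ j ∧ ∀ m, 1 ≤ m → m < j → ∀ i, X m ω i < X j ω i}.Finite) :=
  multivariate_record_count_general d X hmeas hindep hid hcont ζ hζ
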